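/- arXiv:1404.6900 — 4 statements merged into one kernel-verified Lean document; each statement's English description precedes it below -/
import Mathlib

section
/- Let Ṗ : Dom(Ṗ) ⊆ H₁ → H₂ be a Fredholm operator (closed, closed range, finite-dimensional kernel, finite-codimensional range) and let P be a linear extension of Ṗ (Ṗ ⊆ P). If dim ker P < ∞, the range R(P) is closed, and codim R(P) < ∞, then P is closed, and hence P has the Fredholm property. -/
/-- A (possibly unbounded) linear operator between Hilbert spaces has the Fredholm
property if it is closed, its range is closed, its kernel is finite-dimensional and
its range has finite codimension. -/
def IsFredholmPMap {H₁ H₂ : Type*}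
    [NormedAddCommGroup H₁] [InnerProductSpace ℂ H₁] [CompleteSpace H₁]
    [NormedAddCommGroup H₂] [InnerProductSpace ℂ H₂] [CompleteSpace H₂]
    (P : H₁ →ₗ.[ℂ] H₂) : Prop :=
  IsClosed (P.graph : Set (H₁ × H₂)) ∧
  IsClosed ((LinearMap.range P.toFun : Submodule ℂ H₂) : Set H₂) ∧
  FiniteDimensional ℂ (LinearMap.ker P.toFun) ∧
  FiniteDimensional ℂ (H₂ ⧸ LinearMap.range P.toFun)


lemma isClosed_sup_of_finiteDimensional
    {E : Type*} [NormedAddCommGroup E] [NormedSpace ℂ E] [CompleteSpace E]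
    (s t : Submodule ℂ E) (hs : IsClosed (s : Set E)) (ht : FiniteDimensional ℂ t) :
    IsClosed ((s ⊔ t : Submodule ℂ E) : Set E) := by
  haveI := hs
  have hcont : Continuous s.mkQ := continuous_quot_mk
  have himg : FiniteDimensional ℂ (t.map s.mkQ) := Module.Finite.map t s.mkQ
  have hclosed : IsClosed ((t.map s.mkQ : Submodule ℂ (E ⧸ s)) : Set (E ⧸ s)) :=
    Submodule.closed_of_finiteDimensional _
  have heq : (s ⊔ t : Submodule ℂ E) = (t.map s.mkQ).comap s.mkQ := by
    rw [Submodule.comap_map_eq, Submodule.ker_mkQ, sup_comm]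
  rw [heq]
  exact hclosed.preimage hcont

private lemma stmt_1_aux
    {H₁ H₂ : Type*}
    [NormedAddCommGroup H₁] [InnerProductSpace ℂ H₁] [CompleteSpace H₁]
    [NormedAddCommGroup H₂] [InnerProductSpace ℂ H₂] [CompleteSpace H₂]
    (dotP P : H₁ →ₗ.[ℂ] H₂)
    (hF : (IsClosed (dotP.graph : Set (H₁ × H₂)) ∧
      IsClosed ((LinearMap.range dotP.toFun : Submodule ℂ H₂) : Set H₂) ∧
      FiniteDimensional ℂ (LinearMap.ker dotP.toFun) ∧
      FiniteDimensional ℂ (H₂ ⧸ LinearMap.range dotP.toFun)))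
    (hext : dotP ≤ P)
    (hker : FiniteDimensional ℂ (LinearMap.ker P.toFun))
    (hrange : IsClosed ((LinearMap.range P.toFun : Submodule ℂ H₂) : Set H₂))
    (hcodim : FiniteDimensional ℂ (H₂ ⧸ LinearMap.range P.toFun)) :
    IsClosed (P.graph : Set (H₁ × H₂)) := by
  obtain ⟨hGc, hRc, hkd, hcd⟩ := hF
  set R : Submodule ℂ H₂ := LinearMap.range dotP.toFun with hR
  set G : Submodule ℂ (H₁ × H₂) := dotP.graph
  set GP : Submodule ℂ (H₁ × H₂) := P.graph
  have hGG : G ≤ GP := LinearPMap.le_graph_of_le hext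
  -- the kernel graph
  set Kgr : Submodule ℂ (H₁ × H₂) :=
    (LinearMap.ker P.toFun).map ((LinearMap.inl ℂ H₁ H₂).comp P.domain.subtype) with hKgr
  have hKgrfd : FiniteDimensional ℂ Kgr := Module.Finite.map _ _
  have hKgrle : Kgr ≤ GP := by
    rintro _ ⟨x, hx, rfl⟩
    have h0 : P x = 0 := hx
    have hg := P.mem_graph x
    rw [h0] at hg
    exact hg
  -- map from the graph of P to H₂ ⧸ R
  set f : GP →ₗ[ℂ] H₂ ⧸ R :=
    R.mkQ.comp ((LinearMap.snd ℂ H₁ H₂).comp GP.subtype) with hf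
  obtain ⟨W', hW'⟩ := (LinearMap.ker f).exists_isCompl
  have hW'fd : FiniteDimensional ℂ W' := by
    have h1 : FiniteDimensional ℂ (GP ⧸ LinearMap.ker f) :=
      Module.Finite.equiv f.quotKerEquivRange.symm
    exact Module.Finite.equiv ((LinearMap.ker f).quotientEquivOfIsCompl W' hW')
  set W : Submodule ℂ (H₁ × H₂) := W'.map GP.subtype with hW
  have hWfd : FiniteDimensional ℂ W := Module.Finite.map _ _
  have hWle : W ≤ GP := Submodule.map_subtype_le _ _
  -- elements of ker f are in G ⊔ Kgr
  have hkerle : (LinearMap.ker f).map GP.subtype ≤ G ⊔ Kgr := by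
    rintro _ ⟨⟨⟨x, y⟩, hxy⟩, hk, rfl⟩
    have hyR : y ∈ R := by
      have := LinearMap.mem_ker.mp hk
      simpa [f, Submodule.Quotient.mk_eq_zero] using this
    obtain ⟨u, hu⟩ := hyR
    have huG : ((u : H₁), y) ∈ G := by
      have hu' : dotP u = y := hu
      have := dotP.mem_graph u
      rwa [hu'] at this
    have hdiff : ((x - u : H₁), (0 : H₂)) ∈ GP := by
      have := GP.sub_mem hxy (hGG huG)
      simpa using this
    rw [LinearPMap.mem_graph_iff] at hdiff
    obtain ⟨v, hv1, hv2⟩ := hdiff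
    refine Submodule.mem_sup.mpr ⟨((u : H₁), y), huG, ((v : H₁), 0), ?_, ?_⟩
    · exact ⟨v, LinearMap.mem_ker.mpr hv2, by simp⟩
    · show ((u : H₁) + (v : H₁), y + 0) = ((x, y) : H₁ × H₂)
      refine Prod.ext ?_ (add_zero y)
      show (u : H₁) + (v : H₁) = x
      rw [hv1]
      show (u : H₁) + (x - (u : H₁)) = x
      abel
  -- GP = G ⊔ (Kgr ⊔ W)
  have hGPeq : GP = G ⊔ (Kgr ⊔ W) := by
    apply le_antisymm
    · intro z hz
      have : (⟨z, hz⟩ : GP) ∈ (⊤ : Submodule ℂ GP) := trivial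
      rw [← hW'.sup_eq_top] at this
      obtain ⟨a, ha, b, hb, hab⟩ := Submodule.mem_sup.mp this
      have haz : (a : H₁ × H₂) ∈ G ⊔ Kgr := hkerle ⟨a, ha, rfl⟩
      have hbz : (b : H₁ × H₂) ∈ W := ⟨b, hb, rfl⟩
      have : z = (a : H₁ × H₂) + (b : H₁ × H₂) := by
        rw [← Submodule.coe_add, hab]
      rw [this]
      rcases Submodule.mem_sup.mp haz with ⟨g, hg, k, hk, hgk⟩
      refine Submodule.mem_sup.mpr ⟨g, hg, k + b, ?_, by rw [← hgk, add_assoc]⟩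
      exact Submodule.mem_sup.mpr ⟨k, hk, b, hbz, rfl⟩
    · exact sup_le hGG (sup_le hKgrle hWle)
  rw [hGPeq]
  exact isClosed_sup_of_finiteDimensional G (Kgr ⊔ W) hGc (Submodule.finiteDimensional_sup _ _)

/-- If `Ṗ` is Fredholm, `P` extends `Ṗ`, `P` has finite-dimensional kernel,
closed range and finite-codimensional range, then `P` is closed and Fredholm. -/
theorem stmt_1
    {H₁ H₂ : Type*}
    [NormedAddCommGroup H₁] [InnerProductSpace ℂ H₁] [CompleteSpace H₁]
    [NormedAddCommGroup H₂] [InnerProductSpace ℂ H₂] [CompleteSpace H₂]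
    (dotP P : H₁ →ₗ.[ℂ] H₂)
    (hF : IsFredholmPMap dotP)
    (hext : dotP ≤ P)
    (hker : FiniteDimensional ℂ (LinearMap.ker P.toFun))
    (hrange : IsClosed ((LinearMap.range P.toFun : Submodule ℂ H₂) : Set H₂))
    (hcodim : FiniteDimensional ℂ (H₂ ⧸ LinearMap.range P.toFun)) :
    IsClosed (P.graph : Set (H₁ × H₂)) ∧ IsFredholmPMap P := by
  have hclosed : IsClosed (P.graph : Set (H₁ × H₂)) :=
    stmt_1_aux dotP P hF hext hker hrange hcodim
  exact ⟨hclosed, hclosed, hrange, hker, hcodim⟩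
end

section
/- Let P : Dom(P) ⊆ H₁ → H₂ be an unbounded Fredholm operator and A : H₁ → H₂ a bounded linear operator with Dom(A) = H₁. If ‖A‖ is sufficiently small, then P + A (with domain Dom(P)) is Fredholm, ind(P + A) = ind P, dim ker(P + A) ≤ dim ker P, and codim R(P + A) ≤ codim R(P). -/
open Module

/-- The index `dim ker P − codim R(P)` of an unbounded operator. -/
noncomputable def indPMap {H₁ H₂ : Type*}
    [NormedAddCommGroup H₁] [InnerProductSpace ℂ H₁] [CompleteSpace H₁]
    [NormedAddCommGroup H₂] [InnerProductSpace ℂ H₂] [CompleteSpace H₂]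
    (P : H₁ →ₗ.[ℂ] H₂) : ℤ :=
  (finrank ℂ (LinearMap.ker P.toFun) : ℤ) - (finrank ℂ (H₂ ⧸ LinearMap.range P.toFun) : ℤ)

/-- The sum `P + A` of an unbounded operator and an everywhere-defined bounded
operator, with domain `Dom(P)`. -/
def addBounded {H₁ H₂ : Type*}
    [NormedAddCommGroup H₁] [InnerProductSpace ℂ H₁] [CompleteSpace H₁]
    [NormedAddCommGroup H₂] [InnerProductSpace ℂ H₂] [CompleteSpace H₂]
    (P : H₁ →ₗ.[ℂ] H₂) (A : H₁ →L[ℂ] H₂) : H₁ →ₗ.[ℂ] H₂ :=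
  ⟨P.domain, P.toFun + (A : H₁ →ₗ[ℂ] H₂).comp P.domain.subtype⟩

/-!
On its graph, a Banach space because `P` is closed, `P` becomes the bounded operator
`T (x, P x) = P x`, and `P + A` becomes `T + A ∘ fst`; so it suffices to perturb a bounded `T`
with closed range and finite-dimensional kernel and cokernel. Choose complements
`E = X ⊕ ker T` with `X` closed and `F = range T ⊕ W`. Then `(x, w) ↦ T x + w` is an isomorphism
`X × W ≃ F`, and as invertible operators form an open set, `(x, w) ↦ S x + w` stays one for
`S = T + B` with `B` small. Then `S` is block upper triangular with an invertible block
`X → S(X)`, so its kernel and cokernel are those of its Schur complement `ker T → W`, a map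
between finite-dimensional spaces of index `dim ker T - dim W = ind T`.
-/

open Submodule LinearMap Topology

namespace LinearMap

variable {K U V F : Type*} [Field K] [AddCommGroup U] [Module K U] [AddCommGroup V] [Module K V]
  [AddCommGroup F] [Module K F]

/-- `IsFredholmPMap P` is `IsClosed P.graph ∧ P.toFun.IsFredholm`; these remaining conditions
need no topology on the domain. -/
def IsFredholm [TopologicalSpace F] (f : V →ₗ[K] F) : Prop :=
  IsClosed (range f : Set F) ∧ FiniteDimensional K (ker f) ∧ FiniteDimensional K (F ⧸ range f)

variable {f : U →ₗ[K] F} {g : V →ₗ[K] F} {e : U ≃ₗ[K] V}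

theorem range_eq_of_eq_comp_equiv (h : f = g ∘ₗ e.toLinearMap) : range f = range g := by
  rw [h, LinearEquiv.range_comp]

theorem finrank_ker_eq_of_eq_comp_equiv (h : f = g ∘ₗ e.toLinearMap) :
    finrank K (ker f) = finrank K (ker g) := by
  subst h
  exact (e.ofSubmodule' (ker g)).finrank_eq

theorem index_eq_of_eq_comp_equiv (h : f = g ∘ₗ e.toLinearMap) : f.index = g.index := by
  rw [index_eq_finrank_sub, index_eq_finrank_sub, finrank_ker_eq_of_eq_comp_equiv h,
    range_eq_of_eq_comp_equiv h]

theorem isFredholm_iff_of_eq_comp_equiv [TopologicalSpace F] (h : f = g ∘ₗ e.toLinearMap) :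
    f.IsFredholm ↔ g.IsFredholm := by
  subst h
  rw [IsFredholm, IsFredholm, LinearEquiv.range_comp]
  exact and_congr_right' (and_congr_left' (Module.Finite.equiv_iff (e.ofSubmodule' (ker g))))

end LinearMap

section SchurComplement

variable {K V F : Type*} [Field K] [AddCommGroup V] [Module K V] [AddCommGroup F] [Module K F]
  {S : V →ₗ[K] F} {X N : Submodule K V} {W : Submodule K F}

theorem bijective_coprod_of_isCompl (hX : IsCompl (ker S) X) (hW : IsCompl (range S) W) :
    Function.Bijective ((S ∘ₗ X.subtype).coprod W.subtype) := by
  refine ⟨(injective_iff_map_eq_zero _).2 fun ⟨x, w⟩ h => ?_, fun y => ?_⟩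
  · simp only [coprod_apply, comp_apply, Submodule.subtype_apply, ← eq_neg_iff_add_eq_zero] at h
    have hw : (w : F) = 0 :=
      hW.disjoint.le_bot ⟨neg_eq_iff_eq_neg.1 h.symm ▸ (range S).neg_mem (mem_range_self S x), w.2⟩
    rw [hw, neg_zero] at h
    have hx : (x : V) = 0 := hX.disjoint.le_bot ⟨h, x.2⟩
    exact Prod.ext (Subtype.ext hx) (Subtype.ext hw)
  · obtain ⟨_, ⟨v, rfl⟩, w, hw, rfl⟩ := Submodule.mem_sup.1 (hW.sup_eq_top ▸ mem_top (x := y))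
    obtain ⟨k, hk, x, hx, rfl⟩ := Submodule.mem_sup.1 (hX.sup_eq_top ▸ mem_top (x := v))
    exact ⟨(⟨x, hx⟩, ⟨w, hw⟩), by simp [mem_ker.1 hk]⟩

/-- With `V = X ⊕ N` and `F = S(X) ⊕ W`, the operator `S` is block upper triangular with
invertible diagonal block `X → S(X)`; its other diagonal block `N → W` is this map. -/
def schurComplement (S : V →ₗ[K] F) (N : Submodule K V) (e : (X × W) ≃ₗ[K] F) : N →ₗ[K] W :=
  LinearMap.snd K X W ∘ₗ e.symm.toLinearMap ∘ₗ S ∘ₗ N.subtype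

variable {e : (X × W) ≃ₗ[K] F}

theorem symm_apply_map_of_mem (he : ∀ x w, e (x, w) = S x + w) (x : X) :
    e.symm (S x) = (x, 0) :=
  e.symm_apply_eq.2 (by simp [he])

theorem map_fst_add_snd_symm_apply (he : ∀ x w, e (x, w) = S x + w) (y : F) :
    S (e.symm y).1 + (e.symm y).2 = y := by
  rw [← he, Prod.mk.eta, LinearEquiv.apply_symm_apply]

theorem disjoint_ker_of_prodEquiv (he : ∀ x w, e (x, w) = S x + w) : Disjoint X (ker S) := by
  rw [Submodule.disjoint_def]
  intro x hxX hxS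
  have := symm_apply_map_of_mem he ⟨x, hxX⟩
  rw [mem_ker.1 hxS, map_zero] at this
  simpa using congrArg (fun p => (p.1 : V)) this.symm

theorem range_eq_comap_range_schurComplement (he : ∀ x w, e (x, w) = S x + w)
    (hXN : X ⊔ N = ⊤) :
    range S =
      (range (schurComplement S N e)).comap (LinearMap.snd K X W ∘ₗ e.symm.toLinearMap) := by
  ext y
  simp only [mem_comap, mem_range]
  constructor
  · rintro ⟨v, rfl⟩
    obtain ⟨x, hx, n, hn, rfl⟩ := Submodule.mem_sup.1 (hXN ▸ mem_top (x := v))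
    refine ⟨⟨n, hn⟩, ?_⟩
    change (e.symm (S n)).2 = (e.symm (S (x + n))).2
    rw [map_add, map_add, symm_apply_map_of_mem he ⟨x, hx⟩, Prod.snd_add, zero_add]
  · rintro ⟨⟨n, -⟩, hy : (e.symm (S n)).2 = (e.symm y).2⟩
    have hsnd : (e.symm (y - S n)).2 = 0 := by rw [map_sub, Prod.snd_sub, hy, sub_self]
    have hdecomp := map_fst_add_snd_symm_apply he (y - S n)
    rw [hsnd, ZeroMemClass.coe_zero, add_zero] at hdecomp
    exact ⟨n + (e.symm (y - S n)).1, by rw [map_add, hdecomp, add_sub_cancel]⟩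

theorem projectionOnto_mem_ker_schurComplement (he : ∀ x w, e (x, w) = S x + w)
    (hXN : IsCompl X N) {v : V} (hv : v ∈ ker S) :
    N.projectionOnto X hXN.symm v ∈ ker (schurComplement S N e) := by
  have hsplit := projection_add_projection_eq_self hXN v
  rw [projection_apply, projection_apply, ← eq_sub_iff_add_eq'] at hsplit
  rw [mem_ker, schurComplement, LinearMap.comp_apply, LinearMap.comp_apply, LinearMap.comp_apply,
    Submodule.subtype_apply, hsplit, map_sub, mem_ker.1 hv, zero_sub, map_neg, LinearEquiv.coe_coe,
    symm_apply_map_of_mem he, LinearMap.snd_apply, Prod.snd_neg, neg_zero]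

noncomputable def kerEquivKerSchurComplement (he : ∀ x w, e (x, w) = S x + w)
    (hXN : IsCompl X N) : ker S ≃ₗ[K] ker (schurComplement S N e) := by
  refine LinearEquiv.ofBijective
    ((N.projectionOnto X hXN.symm).restrict fun _ => projectionOnto_mem_ker_schurComplement he hXN)
    ⟨(injective_iff_map_eq_zero _).2 fun v hv => ?_, fun n => ?_⟩
  · have hvX : (v : V) ∈ X := by
      rw [← projectionOnto_apply_eq_zero_iff hXN.symm]
      exact congrArg Subtype.val hv
    exact Subtype.ext ((disjoint_ker_of_prodEquiv he).le_bot ⟨hvX, v.2⟩)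
  · obtain ⟨⟨n, hnN⟩, hn⟩ := n
    set x := (e.symm (S n)).1
    have hSx : S x = S n := by
      simpa [show (e.symm (S n)).2 = 0 from hn] using map_fst_add_snd_symm_apply he (S n)
    refine ⟨⟨n - x, by rw [mem_ker, map_sub, hSx, sub_self]⟩, ?_⟩
    ext
    simp [projectionOnto_apply_left hXN.symm ⟨n, hnN⟩]

noncomputable def quotientRangeEquivSchurComplement (he : ∀ x w, e (x, w) = S x + w)
    (hXN : X ⊔ N = ⊤) : (F ⧸ range S) ≃ₗ[K] W ⧸ range (schurComplement S N e) :=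
  (quotEquivOfEq _ _ (by rw [ker_comp, ker_mkQ, range_eq_comap_range_schurComplement he hXN])).trans
    (((range (schurComplement S N e)).mkQ ∘ₗ LinearMap.snd K X W ∘ₗ e.symm.toLinearMap)
      |>.quotKerEquivOfSurjective
        ((range _).mkQ_surjective.comp (Prod.snd_surjective.comp e.symm.surjective)))

theorem index_eq_of_prodEquiv (he : ∀ x w, e (x, w) = S x + w) (hXN : IsCompl X N)
    [FiniteDimensional K N] [FiniteDimensional K W] :
    S.index = finrank K N - finrank K W := by
  rw [index_eq_finrank_sub, (kerEquivKerSchurComplement he hXN).finrank_eq,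
    (quotientRangeEquivSchurComplement he hXN.sup_eq_top).finrank_eq, ← index_eq_finrank_sub,
    index_eq_of_finiteDimensional]

end SchurComplement

theorem isFredholm_of_prodEquiv {𝕜 E F : Type*} [NontriviallyNormedField 𝕜] [CompleteSpace 𝕜]
    [NormedAddCommGroup E] [NormedSpace 𝕜 E] [NormedAddCommGroup F] [NormedSpace 𝕜 F]
    {S : E →L[𝕜] F} {X N : Submodule 𝕜 E} (hXN : IsCompl X N) [FiniteDimensional 𝕜 N]
    {W : Submodule 𝕜 F} [FiniteDimensional 𝕜 W] (e : (X × W) ≃L[𝕜] F)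
    (he : ∀ x w, e (x, w) = S x + w) :
    (S : E →ₗ[𝕜] F).IsFredholm ∧ (S : E →ₗ[𝕜] F).index = finrank 𝕜 N - finrank 𝕜 W ∧
      finrank 𝕜 (ker (S : E →ₗ[𝕜] F)) ≤ finrank 𝕜 N ∧
      finrank 𝕜 (F ⧸ range (S : E →ₗ[𝕜] F)) ≤ finrank 𝕜 W := by
  have he' : ∀ x w, e.toLinearEquiv (x, w) = (S : E →ₗ[𝕜] F) x + w := he
  have kerEquiv := kerEquivKerSchurComplement he' hXN
  have cokerEquiv := quotientRangeEquivSchurComplement he' hXN.sup_eq_top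
  refine ⟨⟨?_, kerEquiv.symm.finiteDimensional, cokerEquiv.symm.finiteDimensional⟩,
    index_eq_of_prodEquiv he' hXN, kerEquiv.finrank_eq.trans_le (finrank_le _),
    cokerEquiv.finrank_eq.trans_le (finrank_quotient_le _)⟩
  rw [range_eq_comap_range_schurComplement he' hXN.sup_eq_top]
  exact (range (schurComplement (S : E →ₗ[𝕜] F) N e.toLinearEquiv)).closed_of_finiteDimensional
    |>.preimage ((ContinuousLinearMap.snd 𝕜 X W).comp e.symm.toContinuousLinearMap).continuous

theorem ContinuousLinearMap.eventually_isFredholm_add {𝕜 E F : Type*} [RCLike 𝕜]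
    [NormedAddCommGroup E] [NormedSpace 𝕜 E] [CompleteSpace E]
    [NormedAddCommGroup F] [NormedSpace 𝕜 F] [CompleteSpace F]
    (T : E →L[𝕜] F) (hT : (T : E →ₗ[𝕜] F).IsFredholm) :
    ∀ᶠ B in 𝓝 (0 : E →L[𝕜] F), ((T + B : E →L[𝕜] F) : E →ₗ[𝕜] F).IsFredholm ∧
      ((T + B : E →L[𝕜] F) : E →ₗ[𝕜] F).index = (T : E →ₗ[𝕜] F).index ∧
      finrank 𝕜 (ker ((T + B : E →L[𝕜] F) : E →ₗ[𝕜] F)) ≤ finrank 𝕜 (ker (T : E →ₗ[𝕜] F)) ∧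
      finrank 𝕜 (F ⧸ range ((T + B : E →L[𝕜] F) : E →ₗ[𝕜] F)) ≤
        finrank 𝕜 (F ⧸ range (T : E →ₗ[𝕜] F)) := by
  obtain ⟨-, hker, hcoker⟩ := hT
  obtain ⟨X, hXclosed, hX⟩ :=
    (ClosedComplemented.of_finiteDimensional (ker (T : E →ₗ[𝕜] F))).exists_isClosed_isCompl
  obtain ⟨W, hW⟩ := (range (T : E →ₗ[𝕜] F)).exists_isCompl
  have hWdim : finrank 𝕜 W = finrank 𝕜 (F ⧸ range (T : E →ₗ[𝕜] F)) :=
    (quotientEquivOfIsCompl _ _ hW).finrank_eq.symm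
  have : FiniteDimensional 𝕜 W := (quotientEquivOfIsCompl _ _ hW).finiteDimensional
  have : CompleteSpace X := hXclosed.completeSpace_coe
  let bordered : (E →L[𝕜] F) → X × W →L[𝕜] F := fun S => (S ∘L X.subtypeL).coprod W.subtypeL
  have hbordered : Continuous fun B => bordered (T + B) := by fun_prop
  have hinv : bordered T ∈ Set.range ((↑) : ((X × W) ≃L[𝕜] F) → X × W →L[𝕜] F) :=
    have hbij := bijective_coprod_of_isCompl hX hW
    ⟨.ofBijective (bordered T) (ker_eq_bot.2 hbij.1) (range_eq_top.2 hbij.2), rfl⟩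
  filter_upwards [hbordered.continuousAt.preimage_mem_nhds
    (ContinuousLinearEquiv.isOpen.mem_nhds (by simpa using hinv))] with B ⟨e, he⟩
  obtain ⟨hfred, hind, hkerle, hcokerle⟩ :=
    isFredholm_of_prodEquiv (S := T + B) hX.symm e fun x w => DFunLike.congr_fun he (x, w)
  exact ⟨hfred, by rw [hind, hWdim, index_eq_finrank_sub], hkerle, hWdim ▸ hcokerle⟩

namespace LinearPMap

variable {R E F : Type*} [Ring R] [AddCommGroup E] [Module R E] [AddCommGroup F] [Module R F]

noncomputable def domainEquivGraph (P : E →ₗ.[R] F) : P.domain ≃ₗ[R] P.graph :=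
  LinearEquiv.ofBijective ((P.domain.subtype.prod P.toFun).codRestrict P.graph P.mem_graph)
    ⟨fun _ _ h => Subtype.ext (congrArg (fun p : P.graph => (p : E × F).1) h),
      fun ⟨_, hp⟩ =>
        let ⟨y, hy₁, hy₂⟩ := P.mem_graph_iff.1 hp
        ⟨y, Subtype.ext (Prod.ext hy₁ hy₂)⟩⟩

theorem toFun_eq_snd_comp_domainEquivGraph [TopologicalSpace E] [TopologicalSpace F]
    (P : E →ₗ.[R] F) :
    P.toFun = ((ContinuousLinearMap.snd R E F ∘L P.graph.subtypeL : P.graph →L[R] F) :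
      P.graph →ₗ[R] F) ∘ₗ P.domainEquivGraph.toLinearMap := by
  ext
  rfl

end LinearPMap

section AddBounded

variable {H₁ H₂ : Type*}
  [NormedAddCommGroup H₁] [InnerProductSpace ℂ H₁] [CompleteSpace H₁]
  [NormedAddCommGroup H₂] [InnerProductSpace ℂ H₂] [CompleteSpace H₂]

theorem addBounded_toFun_eq (P : H₁ →ₗ.[ℂ] H₂) (A : H₁ →L[ℂ] H₂) :
    (addBounded P A).toFun =
      ((ContinuousLinearMap.snd ℂ H₁ H₂ ∘L P.graph.subtypeL +
          A ∘L ContinuousLinearMap.fst ℂ H₁ H₂ ∘L P.graph.subtypeL : P.graph →L[ℂ] H₂) :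
        P.graph →ₗ[ℂ] H₂) ∘ₗ P.domainEquivGraph.toLinearMap := by
  ext
  rfl

theorem isClosed_graph_addBounded (P : H₁ →ₗ.[ℂ] H₂) (A : H₁ →L[ℂ] H₂)
    (h : IsClosed (P.graph : Set (H₁ × H₂))) :
    IsClosed ((addBounded P A).graph : Set (H₁ × H₂)) := by
  have hgraph : ((addBounded P A).graph : Set (H₁ × H₂)) =
      (fun p : H₁ × H₂ => (p.1, p.2 - A p.1)) ⁻¹' P.graph := by
    ext ⟨x, y⟩
    simp only [Set.mem_preimage, SetLike.mem_coe, LinearPMap.mem_graph_iff, eq_sub_iff_add_eq]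
    refine exists_congr fun z => and_congr_right fun hz => ?_
    rw [← hz]
    rfl
  rw [hgraph]
  exact h.preimage (by fun_prop)

end AddBounded

/-- small bounded perturbations of an unbounded Fredholm operator are
Fredholm with the same index, and the kernel dimension and range codimension do not
increase. -/
theorem stmt_2
    {H₁ H₂ : Type*}
    [NormedAddCommGroup H₁] [InnerProductSpace ℂ H₁] [CompleteSpace H₁]
    [NormedAddCommGroup H₂] [InnerProductSpace ℂ H₂] [CompleteSpace H₂]
    (P : H₁ →ₗ.[ℂ] H₂) (hF : IsFredholmPMap P) :
    ∃ ε > 0, ∀ A : H₁ →L[ℂ] H₂, ‖A‖ < ε →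
      IsFredholmPMap (addBounded P A) ∧
      indPMap (addBounded P A) = indPMap P ∧
      finrank ℂ (LinearMap.ker (addBounded P A).toFun) ≤
        finrank ℂ (LinearMap.ker P.toFun) ∧
      finrank ℂ (H₂ ⧸ LinearMap.range (addBounded P A).toFun) ≤
        finrank ℂ (H₂ ⧸ LinearMap.range P.toFun) := by
  obtain ⟨hgraph, hP⟩ : IsClosed (P.graph : Set (H₁ × H₂)) ∧ P.toFun.IsFredholm := hF
  have : CompleteSpace P.graph := hgraph.completeSpace_coe
  have hP₀ := P.toFun_eq_snd_comp_domainEquivGraph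
  rw [isFredholm_iff_of_eq_comp_equiv hP₀] at hP
  have hcomp : Filter.Tendsto
      (fun A : H₁ →L[ℂ] H₂ => A ∘L ContinuousLinearMap.fst ℂ H₁ H₂ ∘L P.graph.subtypeL)
      (𝓝 0) (𝓝 0) := by
    simpa using (continuous_id.clm_comp continuous_const).tendsto 0
  obtain ⟨ε, hε, hsmall⟩ := Metric.eventually_nhds_iff.1
    (hcomp.eventually (ContinuousLinearMap.eventually_isFredholm_add _ hP))
  refine ⟨ε, hε, fun A hA => ?_⟩
  have hA := addBounded_toFun_eq P A
  obtain ⟨hfred, hind, hker, hcoker⟩ := hsmall (by rwa [dist_zero_right] : dist A 0 < ε)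
  refine ⟨⟨isClosed_graph_addBounded P A hgraph, (isFredholm_iff_of_eq_comp_equiv hA).2 hfred⟩,
    ?_, ?_, ?_⟩
  · change (addBounded P A).toFun.index = P.toFun.index
    rwa [index_eq_of_eq_comp_equiv hA, index_eq_of_eq_comp_equiv hP₀]
  · rwa [finrank_ker_eq_of_eq_comp_equiv hA, finrank_ker_eq_of_eq_comp_equiv hP₀]
  · rwa [range_eq_of_eq_comp_equiv hA, range_eq_of_eq_comp_equiv hP₀]
end

section
/- Let P : Dom(P) ⊆ H₁ → H₂ be a closed operator whose graph is a closed subspace of H₁ × H₂ and suppose P is Fredholm. Let (P_t)_{t∈[0,1]} be a family of Fredholm operators such that for each t there is ε_t > 0 with δ̂(P_t, P_{t+s}) ≤ c_t |s| for |s| ≤ ε_t. Then ind P_t is constant on [0,1]. -/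
open Module

/-- The Hilbert norm `‖(u,f)‖ = (‖u‖² + ‖f‖²)^{1/2}` on `H₁ × H₂`. -/
noncomputable def pairNorm {H₁ H₂ : Type*}
    [NormedAddCommGroup H₁] [NormedAddCommGroup H₂] (p : H₁ × H₂) : ℝ :=
  Real.sqrt (‖p.1‖ ^ 2 + ‖p.2‖ ^ 2)

/-- Distance (w.r.t. the Hilbert norm on `H₁ × H₂`) from a point to a set. -/
noncomputable def pairDist {H₁ H₂ : Type*}
    [NormedAddCommGroup H₁] [NormedAddCommGroup H₂]
    (p : H₁ × H₂) (s : Set (H₁ × H₂)) : ℝ :=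
  ⨅ q : s, pairNorm (p - (q : H₁ × H₂))

/-- The directed gap `δ(P,S)`: supremum over unit vectors of the graph of `P` of the
distance to the graph of `S`. -/
noncomputable def gapDelta {H₁ H₂ : Type*}
    [NormedAddCommGroup H₁] [InnerProductSpace ℂ H₁] [CompleteSpace H₁]
    [NormedAddCommGroup H₂] [InnerProductSpace ℂ H₂] [CompleteSpace H₂]
    (P S : H₁ →ₗ.[ℂ] H₂) : ℝ :=
  ⨆ x : {x : H₁ × H₂ // x ∈ P.graph ∧ pairNorm x = 1},
    pairDist (x : H₁ × H₂) (S.graph : Set (H₁ × H₂))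

/-- The gap `δ̂(P,S) = max{δ(P,S), δ(S,P)}` between two closed operators. -/
noncomputable def gapHat {H₁ H₂ : Type*}
    [NormedAddCommGroup H₁] [InnerProductSpace ℂ H₁] [CompleteSpace H₁]
    [NormedAddCommGroup H₂] [InnerProductSpace ℂ H₂] [CompleteSpace H₂]
    (P S : H₁ →ₗ.[ℂ] H₂) : ℝ :=
  max (gapDelta P S) (gapDelta S P)

/-!
A closed operator `P` is replaced by the bounded operator `(u, P u) ↦ P u` on its graph, a closed
subspace of the `ℓ²` product `H₁ × H₂`; this operator has the kernel and range of `P`. When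
`δ̂(P, Q) < 1/2`, orthogonal projection maps the graph of `P` isomorphically onto the graph of `Q`,
moving every point by at most `δ̂(P, Q)` times its norm, so `Q` becomes a bounded operator on the
graph of `P` with the index of `Q` and at distance at most `δ̂(P, Q)` from `P`.

The index of a bounded Fredholm operator `T` is stable under small perturbations: if `W` is a closed
complement of `ker T` and `p` a projection onto `range T`, then `p ∘ S ∘ (W ↪ X)` stays invertible
for `S` near `T`, and this alone forces `ind S = codim W - dim (ker p) = ind T`.

Since `δ̂(P_t, P_s) → 0` as `s → t`, the index `t ↦ ind P_t` is locally constant on the connected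
interval `[0, 1]`, hence constant.
-/

open Function LinearMap Filter Topology

namespace LinearMap
variable {R M N P : Type*} [Ring R] [AddCommGroup M] [Module R M] [AddCommGroup N] [Module R N]
  [AddCommGroup P] [Module R P]

theorem index_comp_linearEquiv (f : N →ₗ[R] P) (e : M ≃ₗ[R] N) :
    (f ∘ₗ e.toLinearMap).index = f.index := by
  rw [index_eq_finrank_sub, index_eq_finrank_sub, ker_comp, range_comp_of_range_eq_top _ e.range,
    Submodule.comap_equiv_eq_map_symm, LinearEquiv.finrank_map_eq]

section Compression
variable {f : M →ₗ[R] N} {W : Submodule R M} {p : N →ₗ[R] P}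

theorem disjoint_ker_of_injective_comp (h : Injective (p ∘ₗ f ∘ₗ W.subtype)) :
    Disjoint W (ker f) := by
  rw [Submodule.disjoint_def]
  intro x hxW hxf
  have : p (f x) = p (f 0) := by simp [mem_ker.1 hxf]
  simpa using h (a₁ := ⟨x, hxW⟩) (a₂ := 0) this

theorem isCompl_map_ker_of_bijective_comp (h : Bijective (p ∘ₗ f ∘ₗ W.subtype)) :
    IsCompl (W.map f) (ker p) := by
  constructor
  · rw [Submodule.disjoint_def]
    rintro _ ⟨x, hxW, rfl⟩ hx
    have := h.1 (a₁ := ⟨x, hxW⟩) (a₂ := 0) (by simpa using hx)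
    simp [show x = 0 from congrArg Subtype.val this]
  · rw [codisjoint_iff, eq_top_iff]
    intro y _
    obtain ⟨x, hx⟩ := h.2 (p y)
    refine Submodule.mem_sup.2 ⟨f x, ⟨x, x.2, rfl⟩, y - f x, ?_, add_sub_cancel _ _⟩
    simp [mem_ker, ← hx]

theorem bijective_comp_of_isCompl (hW : IsCompl (ker f) W) {p : N →ₗ[R] range f}
    (hp : ∀ y : range f, p y = y) : Bijective (p ∘ₗ f ∘ₗ W.subtype) := by
  have hpf : ∀ x, p (f x) = ⟨f x, mem_range_self f x⟩ := fun x => hp ⟨f x, _⟩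
  constructor
  · rw [← ker_eq_bot, Submodule.eq_bot_iff]
    rintro ⟨x, hxW⟩ hx
    have hfx : f x = 0 := by simpa [hpf] using hx
    simpa using hW.disjoint.le_bot ⟨hfx, hxW⟩
  · rintro ⟨_, x, rfl⟩
    obtain ⟨y, hy, z, hz, rfl⟩ := Submodule.mem_sup.1 (hW.sup_eq_top ▸ Submodule.mem_top (x := x))
    refine ⟨⟨z, hz⟩, ?_⟩
    simp [hpf, mem_ker.1 hy]

end Compression

variable {k : Type*} [Field k] [Module k M] [Module k N] [Module k P]

theorem index_eq_finrank_quotient_sub (f : M →ₗ[k] N) (W : Submodule k M)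
    (hW : Disjoint W (ker f)) [FiniteDimensional k (M ⧸ W)]
    [FiniteDimensional k (N ⧸ W.map f)] :
    f.index = finrank k (M ⧸ W) - finrank k (N ⧸ W.map f) := by
  have hinj : Injective (f ∘ₗ W.subtype) := by
    rwa [← ker_eq_bot, ker_comp, ← Submodule.disjoint_iff_comap_eq_bot]
  have : FiniteDimensional k (ker f) := by
    refine Module.Finite.of_injective (W.mkQ ∘ₗ (ker f).subtype) ?_
    rw [← ker_eq_bot, ker_comp, Submodule.ker_mkQ, ← Submodule.disjoint_iff_comap_eq_bot]
    exact hW.symm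
  have : FiniteDimensional k (N ⧸ range f) :=
    Module.Finite.of_surjective _ (Submodule.factor_surjective (map_le_range (p := W)))
  have : FiniteDimensional k (ker (f ∘ₗ W.subtype)) := by rw [ker_eq_bot.2 hinj]; infer_instance
  have : FiniteDimensional k (N ⧸ range (f ∘ₗ W.subtype)) := by
    rw [range_comp, Submodule.range_subtype]; infer_instance
  have : FiniteDimensional k (ker W.subtype) := by rw [Submodule.ker_subtype]; infer_instance
  have : FiniteDimensional k (M ⧸ range W.subtype) := by
    rw [Submodule.range_subtype]; infer_instance
  have hcomp := index_comp (f := W.subtype) f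
  rw [index_of_injective hinj, index_of_injective W.injective_subtype, range_comp,
    Submodule.range_subtype] at hcomp
  lia

theorem index_eq_of_bijective_comp (f : M →ₗ[k] N) (W : Submodule k M) (p : N →ₗ[k] P)
    (h : Bijective (p ∘ₗ f ∘ₗ W.subtype)) [FiniteDimensional k (M ⧸ W)]
    [FiniteDimensional k (ker p)] :
    f.index = finrank k (M ⧸ W) - finrank k (ker p) := by
  have e := Submodule.quotientEquivOfIsCompl _ _ (isCompl_map_ker_of_bijective_comp h)
  have : FiniteDimensional k (N ⧸ W.map f) := e.symm.finiteDimensional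
  rw [index_eq_finrank_quotient_sub f W (disjoint_ker_of_injective_comp h.1), e.finrank_eq]

end LinearMap

namespace ContinuousLinearMap
variable {𝕜 X Y : Type*} [RCLike 𝕜] [NormedAddCommGroup X] [NormedSpace 𝕜 X] [CompleteSpace X]
  [NormedAddCommGroup Y] [NormedSpace 𝕜 Y] [CompleteSpace Y]

theorem eventually_index_eq (T : X →L[𝕜] Y) [FiniteDimensional 𝕜 T.ker]
    (hT : IsClosed (T.range : Set Y)) [FiniteDimensional 𝕜 (Y ⧸ T.range)] :
    ∀ᶠ S : X →L[𝕜] Y in 𝓝 T, S.index = T.index := by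
  obtain ⟨q, hq⟩ := Submodule.ClosedComplemented.of_finiteDimensional T.ker
  obtain ⟨p, hp⟩ := Submodule.ClosedComplemented.of_finiteDimensional_quotient hT
  set W := q.ker
  have : CompleteSpace W := q.isClosed_ker.completeSpace_coe
  have : CompleteSpace T.range := hT.completeSpace_coe
  have hW : IsCompl T.ker W := isCompl_of_proj hq
  have : FiniteDimensional 𝕜 (X ⧸ W) :=
    (Submodule.quotientEquivOfIsCompl W T.ker hW.symm).symm.finiteDimensional
  have : FiniteDimensional 𝕜 p.ker :=
    (Submodule.quotientEquivOfIsCompl _ _ (isCompl_of_proj hp)).finiteDimensional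
  let compress : (X →L[𝕜] Y) → (W →L[𝕜] T.range) := fun S => p ∘L S ∘L W.subtypeL
  have hcont : Continuous compress := by fun_prop
  have hTbij : Bijective (compress T) := bijective_comp_of_isCompl hW hp
  have hinvertible : ∀ᶠ S in 𝓝 T,
      compress S ∈ Set.range ((↑) : (W ≃L[𝕜] T.range) → W →L[𝕜] T.range) :=
    hcont.continuousAt.preimage_mem_nhds <| ContinuousLinearEquiv.isOpen.mem_nhds
      ⟨.ofBijective (compress T) (ker_eq_bot.2 hTbij.1) (range_eq_top.2 hTbij.2), rfl⟩
  filter_upwards [hinvertible] with S ⟨e, he⟩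
  have hS : Bijective (compress S) := he ▸ e.bijective
  rw [index_eq_of_bijective_comp _ W _ hS, index_eq_of_bijective_comp _ W _ hTbij]

end ContinuousLinearMap

namespace Submodule
variable {𝕜 E : Type*} [RCLike 𝕜] [NormedAddCommGroup E] [InnerProductSpace 𝕜 E]

theorem exists_continuousLinearEquiv_of_norm_sub_starProjection_le {U V : Submodule 𝕜 E}
    [CompleteSpace U] [CompleteSpace V] {δ : ℝ} (hδ0 : 0 ≤ δ) (hδ : δ < 1 / 2)
    (hUV : ∀ x ∈ U, ‖x - V.starProjection x‖ ≤ δ * ‖x‖)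
    (hVU : ∀ y ∈ V, ‖y - U.starProjection y‖ ≤ δ * ‖y‖) :
    ∃ e : U ≃L[𝕜] V, ‖V.subtypeL ∘L (e : U →L[𝕜] V) - U.subtypeL‖ ≤ δ := by
  set f : U →L[𝕜] V := V.orthogonalProjectionOnto ∘L U.subtypeL
  have hf : ‖V.subtypeL ∘L f - U.subtypeL‖ ≤ δ :=
    ContinuousLinearMap.opNorm_le_bound _ hδ0 fun x => by simpa [f, norm_sub_rev] using hUV x x.2
  have hinj : Injective f := by
    refine (injective_iff_map_eq_zero f).2 fun x hx => ?_
    have h0 : V.starProjection (x : E) = 0 := coe_eq_zero.2 hx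
    have : ‖x‖ ≤ δ * ‖x‖ := by simpa [h0] using hUV x x.2
    exact norm_eq_zero.1 (by nlinarith [norm_nonneg x])
  -- `f` is onto because `f ∘ (projection onto U)` is within `2δ < 1` of the identity of `V`.
  set g : V →L[𝕜] V := f ∘L U.orthogonalProjectionOnto ∘L V.subtypeL
  have hg : ‖1 - g‖ < 1 := by
    refine (ContinuousLinearMap.opNorm_le_bound _ (by positivity) fun y => ?_).trans_lt
      (by linarith : 2 * δ < 1)
    have hy : ((1 - g) y : E) = ((y : E) - U.starProjection y)
        + (U.starProjection y - V.starProjection (U.starProjection y)) := by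
      change (y : E) - V.starProjection (U.starProjection y) = _
      abel
    calc ‖(1 - g) y‖ = ‖((1 - g) y : E)‖ := rfl
      _ ≤ δ * ‖(y : E)‖ + δ * ‖U.starProjection (y : E)‖ := by
        rw [hy]
        exact (norm_add_le _ _).trans (add_le_add (hVU y y.2) (hUV _ (coe_mem _)))
      _ ≤ 2 * δ * ‖(y : E)‖ := by
        nlinarith [norm_starProjection_apply_le U (y : E)]
  have hgunit : IsUnit g := sub_sub_self 1 g ▸ (Units.oneSub (1 - g) hg).isUnit
  have hgsurj : Surjective g := (ContinuousLinearMap.isUnit_iff_bijective.1 hgunit).2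
  have hsurj : Surjective f := fun y =>
    let ⟨x, hx⟩ := hgsurj y; ⟨_, hx⟩
  exact ⟨.ofBijective f (ker_eq_bot.2 hinj) (range_eq_top.2 hsurj), hf⟩

end Submodule

namespace LinearPMap
variable {𝕜 E F : Type*} [NormedField 𝕜] [NormedAddCommGroup E] [NormedSpace 𝕜 E]
  [NormedAddCommGroup F] [NormedSpace 𝕜 F] (P : E →ₗ.[𝕜] F)

def graphLp : Submodule 𝕜 (WithLp 2 (E × F)) :=
  P.graph.comap (WithLp.linearEquiv 2 𝕜 (E × F)).toLinearMap

theorem isClosed_graphLp (h : _root_.IsClosed (P.graph : Set (E × F))) :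
    _root_.IsClosed (P.graphLp : Set (WithLp 2 (E × F))) :=
  h.preimage (WithLp.prod_continuous_ofLp 2 _ _)

noncomputable def graphLpSnd : P.graphLp →L[𝕜] F := WithLp.sndL 2 𝕜 E F ∘L P.graphLp.subtypeL

noncomputable def domainEquivGraphLp : P.domain ≃ₗ[𝕜] P.graphLp :=
  LinearEquiv.ofBijective
    ((WithLp.linearEquiv 2 𝕜 (E × F)).symm.toLinearMap ∘ₗ P.domain.subtype.prod P.toFun
      |>.codRestrict P.graphLp fun x => P.mem_graph x)
    ⟨fun x y h => Subtype.ext (congrArg (fun z : P.graphLp => (z : WithLp 2 (E × F)).fst) h),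
      fun ⟨z, hz⟩ => by
        obtain ⟨x, hx1, hx2⟩ := P.mem_graph_iff.1 hz
        exact ⟨x, Subtype.ext (WithLp.ofLp_injective 2 (Prod.ext hx1 hx2))⟩⟩

theorem graphLpSnd_comp_domainEquivGraphLp :
    P.graphLpSnd.toLinearMap ∘ₗ P.domainEquivGraphLp.toLinearMap = P.toFun := rfl

theorem ker_graphLpSnd :
    P.graphLpSnd.ker = P.toFun.ker.map P.domainEquivGraphLp.toLinearMap := by
  rw [← graphLpSnd_comp_domainEquivGraphLp, ker_comp,
    Submodule.map_comap_eq_of_surjective P.domainEquivGraphLp.surjective]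

theorem range_graphLpSnd : P.graphLpSnd.range = P.toFun.range := by
  rw [← graphLpSnd_comp_domainEquivGraphLp, range_comp_of_range_eq_top _ (LinearEquiv.range _)]

theorem index_graphLpSnd : P.graphLpSnd.index = P.toFun.index := by
  rw [← graphLpSnd_comp_domainEquivGraphLp, index_comp_linearEquiv]

end LinearPMap

theorem LinearPMap.norm_graphLpSnd_comp_sub_le {𝕜 E F : Type*} [NontriviallyNormedField 𝕜]
    [NormedAddCommGroup E] [NormedSpace 𝕜 E] [NormedAddCommGroup F] [NormedSpace 𝕜 F]
    {P : E →ₗ.[𝕜] F} (Q : E →ₗ.[𝕜] F) (e : P.graphLp →L[𝕜] Q.graphLp) :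
    ‖Q.graphLpSnd ∘L e - P.graphLpSnd‖ ≤ ‖Q.graphLp.subtypeL ∘L e - P.graphLp.subtypeL‖ := by
  refine ContinuousLinearMap.opNorm_le_bound _ (ContinuousLinearMap.opNorm_nonneg _) fun x => ?_
  calc ‖(Q.graphLpSnd ∘L e - P.graphLpSnd) x‖
      = ‖((Q.graphLp.subtypeL ∘L e - P.graphLp.subtypeL) x).snd‖ := rfl
    _ ≤ ‖(Q.graphLp.subtypeL ∘L e - P.graphLp.subtypeL) x‖ := WithLp.norm_snd_le (x := _)
    _ ≤ _ := ContinuousLinearMap.le_opNorm _ _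

theorem pairNorm_eq_norm_toLp {E F : Type*} [NormedAddCommGroup E] [NormedAddCommGroup F]
    (p : E × F) : pairNorm p = ‖WithLp.toLp 2 p‖ := by
  rw [WithLp.prod_norm_eq_of_L2]
  rfl

section PairDist
variable {𝕜 E F : Type*} [NormedField 𝕜] [NormedAddCommGroup E] [NormedSpace 𝕜 E]
  [NormedAddCommGroup F] [NormedSpace 𝕜 F]

theorem pairDist_graph_eq_iInf (p : E × F) (Q : E →ₗ.[𝕜] F) :
    pairDist p Q.graph = ⨅ w : Q.graphLp, ‖WithLp.toLp 2 p - w‖ :=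
  Equiv.iInf_congr (Equiv.subtypeEquiv (WithLp.equiv 2 (E × F)).symm fun _ => Iff.rfl)
    fun q => by rw [pairNorm_eq_norm_toLp, WithLp.toLp_sub]; rfl

theorem pairDist_graph_le_pairNorm (p : E × F) (Q : E →ₗ.[𝕜] F) :
    pairDist p Q.graph ≤ pairNorm p := by
  rw [pairDist_graph_eq_iInf, pairNorm_eq_norm_toLp]
  simpa using ciInf_le (f := fun w : Q.graphLp => ‖WithLp.toLp 2 p - w‖)
    ⟨0, by rintro _ ⟨w, rfl⟩; positivity⟩ 0

end PairDist

theorem norm_sub_starProjection_eq_pairDist {𝕜 E F : Type*} [RCLike 𝕜]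
    [NormedAddCommGroup E] [InnerProductSpace 𝕜 E] [NormedAddCommGroup F] [InnerProductSpace 𝕜 F]
    (Q : E →ₗ.[𝕜] F) [Q.graphLp.HasOrthogonalProjection] (z : WithLp 2 (E × F)) :
    ‖z - Q.graphLp.starProjection z‖ = pairDist z.ofLp Q.graph := by
  rw [pairDist_graph_eq_iInf, Submodule.starProjection_minimal]

section Gap
variable {H₁ H₂ : Type*}
    [NormedAddCommGroup H₁] [InnerProductSpace ℂ H₁] [CompleteSpace H₁]
    [NormedAddCommGroup H₂] [InnerProductSpace ℂ H₂] [CompleteSpace H₂]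

theorem gapDelta_nonneg (P Q : H₁ →ₗ.[ℂ] H₂) : 0 ≤ gapDelta P Q :=
  Real.iSup_nonneg fun _ => Real.iInf_nonneg fun _ => Real.sqrt_nonneg _

theorem gapHat_nonneg (P Q : H₁ →ₗ.[ℂ] H₂) : 0 ≤ gapHat P Q :=
  (gapDelta_nonneg P Q).trans (le_max_left _ _)

theorem norm_sub_starProjection_le_gapDelta (P Q : H₁ →ₗ.[ℂ] H₂) [CompleteSpace Q.graphLp]
    {x : WithLp 2 (H₁ × H₂)} (hx : x ∈ P.graphLp) :
    ‖x - Q.graphLp.starProjection x‖ ≤ gapDelta P Q * ‖x‖ := by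
  have hbdd : BddAbove (Set.range fun y : {y : H₁ × H₂ // y ∈ P.graph ∧ pairNorm y = 1} =>
      pairDist (y : H₁ × H₂) (Q.graph : Set (H₁ × H₂))) :=
    ⟨1, by rintro _ ⟨⟨y, -, hy⟩, rfl⟩; exact (pairDist_graph_le_pairNorm y Q).trans hy.le⟩
  let L := (1 - Q.graphLp.starProjection) ∘L P.graphLp.subtypeL
  have hL : ‖L‖ ≤ gapDelta P Q := by
    refine ContinuousLinearMap.opNorm_le_of_unit_norm (gapDelta_nonneg P Q) fun u hu => ?_
    have hu' : pairNorm (u : WithLp 2 (H₁ × H₂)).ofLp = 1 := by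
      rw [pairNorm_eq_norm_toLp]; exact hu
    calc ‖L u‖ = pairDist (u : WithLp 2 (H₁ × H₂)).ofLp Q.graph :=
          norm_sub_starProjection_eq_pairDist Q u
      _ ≤ gapDelta P Q := le_ciSup hbdd ⟨_, u.2, hu'⟩
  exact L.le_opNorm ⟨x, hx⟩ |>.trans (mul_le_mul_of_nonneg_right hL (norm_nonneg _))

theorem exists_forall_gapHat_lt_indPMap_eq {P : H₁ →ₗ.[ℂ] H₂} (hP : IsFredholmPMap P) :
    ∃ ε > 0, ∀ Q : H₁ →ₗ.[ℂ] H₂, IsClosed (Q.graph : Set (H₁ × H₂)) → gapHat P Q < ε →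
      indPMap Q = indPMap P := by
  obtain ⟨hPg, hPr, hPk, hPc⟩ := hP
  have : CompleteSpace P.graphLp := (P.isClosed_graphLp hPg).completeSpace_coe
  have : FiniteDimensional ℂ P.graphLpSnd.ker := by rw [P.ker_graphLpSnd]; infer_instance
  have : FiniteDimensional ℂ (H₂ ⧸ P.graphLpSnd.range) := by rwa [P.range_graphLpSnd]
  have hstable := P.graphLpSnd.eventually_index_eq (by rwa [P.range_graphLpSnd])
  obtain ⟨ε, hε, hstable⟩ := (Metric.eventually_nhds_iff (α := P.graphLp →L[ℂ] H₂)).1 hstable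
  refine ⟨min ε (1 / 2), by positivity, fun Q hQg hPQ => ?_⟩
  have : CompleteSpace Q.graphLp := (Q.isClosed_graphLp hQg).completeSpace_coe
  obtain ⟨e, he⟩ := Submodule.exists_continuousLinearEquiv_of_norm_sub_starProjection_le
    (gapHat_nonneg P Q) (hPQ.trans_le (min_le_right _ _))
    (fun x hx => (norm_sub_starProjection_le_gapDelta P Q hx).trans <| by
      gcongr; exact le_max_left _ _)
    (fun y hy => (norm_sub_starProjection_le_gapDelta Q P hy).trans <| by
      gcongr; exact le_max_right _ _)
  set S := Q.graphLpSnd ∘L (e : P.graphLp →L[ℂ] Q.graphLp)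
  have hdist : dist S P.graphLpSnd < ε :=
    (dist_eq_norm S P.graphLpSnd).trans_lt <| (P.norm_graphLpSnd_comp_sub_le Q e).trans he
      |>.trans_lt <| hPQ.trans_le (min_le_left _ _)
  calc indPMap Q = S.index :=
        Q.index_graphLpSnd.symm.trans (index_comp_linearEquiv _ e.toLinearEquiv).symm
    _ = P.graphLpSnd.index := hstable hdist
    _ = indPMap P := P.index_graphLpSnd

end Gap

theorem eventually_nhdsWithin_lt_of_le_mul_abs {A : Set ℝ} {g : ℝ → ℝ} {t ε c η : ℝ}
    (hε : 0 < ε) (h : ∀ s : ℝ, |s| ≤ ε → t + s ∈ A → g (t + s) ≤ c * |s|) (hη : 0 < η) :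
    ∀ᶠ s in 𝓝[A] t, g s < η := by
  have hnear : ∀ᶠ s in 𝓝 t, |s - t| ≤ ε := by
    filter_upwards [Metric.closedBall_mem_nhds t hε] with s hs
    rwa [Metric.mem_closedBall, Real.dist_eq] at hs
  have hsmall : ∀ᶠ s in 𝓝 t, c * |s - t| < η := by
    have : Tendsto (fun s => c * |s - t|) (𝓝 t) (𝓝 (c * |t - t|)) :=
      Continuous.tendsto (by fun_prop) t
    rw [sub_self, abs_zero, mul_zero] at this
    exact this.eventually (gt_mem_nhds hη)
  filter_upwards [nhdsWithin_le_nhds hnear, nhdsWithin_le_nhds hsmall, self_mem_nhdsWithin]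
    with s hs₁ hs₂ hsA
  have := h (s - t) hs₁ (by rwa [add_sub_cancel])
  rw [add_sub_cancel] at this
  linarith

/-- a family `(P_t)_{t∈[0,1]}` of Fredholm operators that is locally
Lipschitz in the gap metric has constant index on `[0,1]`. -/
theorem stmt_5
    {H₁ H₂ : Type*}
    [NormedAddCommGroup H₁] [InnerProductSpace ℂ H₁] [CompleteSpace H₁]
    [NormedAddCommGroup H₂] [InnerProductSpace ℂ H₂] [CompleteSpace H₂]
    (P : ℝ → (H₁ →ₗ.[ℂ] H₂))
    (hF : ∀ t ∈ Set.Icc (0 : ℝ) 1, IsFredholmPMap (P t))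
    (hgap : ∀ t ∈ Set.Icc (0 : ℝ) 1, ∃ ε > 0, ∃ c > 0, ∀ s : ℝ, |s| ≤ ε →
      t + s ∈ Set.Icc (0 : ℝ) 1 → gapHat (P t) (P (t + s)) ≤ c * |s|) :
    ∀ t₁ ∈ Set.Icc (0 : ℝ) 1, ∀ t₂ ∈ Set.Icc (0 : ℝ) 1,
      indPMap (P t₁) = indPMap (P t₂) := by
  intro t₁ ht₁ t₂ ht₂
  refine isPreconnected_Icc.constant (f := fun t => indPMap (P t)) (fun t ht => ?_) ht₁ ht₂
  obtain ⟨δ, hδ, hstep⟩ := exists_forall_gapHat_lt_indPMap_eq (hF t ht)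
  obtain ⟨ε, hε, c, -, hlip⟩ := hgap t ht
  have hclose :=
    eventually_nhdsWithin_lt_of_le_mul_abs (g := fun s => gapHat (P t) (P s)) hε hlip hδ
  rw [ContinuousWithinAt, nhds_discrete, tendsto_pure]
  filter_upwards [hclose, self_mem_nhdsWithin] with s hs hsI
  exact hstep _ (hF s hsI).1 hs
end

section
/- Let P : Dom(P) ⊆ H₁ → H₂ be Fredholm and let Q : Dom(Q) ⊆ H₁ → H be defined by the same formula with H₂ continuously and densely embedded in H, where Dom(Q) ⊇ Dom(P), ker Q = ker P, Q is Fredholm, and R(Q) ∩ H₂ = R(P). Then codim_{H₂} R(P) = codim_H R(Q), and hence ind P = ind Q. -/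
/-!
The map `H₂ → H ⧸ R(Q)`, `f ↦ [ι f]`, has kernel `R(P)` because `R(Q) ∩ H₂ = R(P)`. It is onto:
its range is dense since `ι` has dense range, and closed since it is a finite-dimensional subspace
of `H ⧸ R(Q)`, which is Hausdorff because `R(Q)` is closed. Hence
`H₂ ⧸ R(P) ≃ H ⧸ R(Q)`, and with `ker P = ker Q` the indices agree.
-/

open Module

section
variable {𝕜 E F : Type*} [NontriviallyNormedField 𝕜] [CompleteSpace 𝕜]
  [AddCommGroup E] [Module 𝕜 E] [TopologicalSpace E] [IsTopologicalAddGroup E]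
  [ContinuousSMul 𝕜 E] [AddCommGroup F] [Module 𝕜 F]

theorem Submodule.surjective_mkQ_comp_of_denseRange (S : Submodule 𝕜 E)
    [IsClosed (S : Set E)] [FiniteDimensional 𝕜 (E ⧸ S)]
    {f : F →ₗ[𝕜] E} (hf : DenseRange f) : Function.Surjective (S.mkQ ∘ₗ f) := by
  have hdense : DenseRange (S.mkQ ∘ₗ f) :=
    S.mkQ_surjective.denseRange.comp hf S.isOpenQuotientMap_mkQ.continuous
  rw [← LinearMap.range_eq_top, ← SetLike.coe_set_eq, Submodule.top_coe,
    ← (LinearMap.range _).closed_of_finiteDimensional.closure_eq]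
  exact hdense.closure_range

theorem Submodule.finrank_quotient_comap_eq_of_denseRange (S : Submodule 𝕜 E)
    [IsClosed (S : Set E)] [FiniteDimensional 𝕜 (E ⧸ S)]
    {f : F →ₗ[𝕜] E} (hf : DenseRange f) :
    finrank 𝕜 (F ⧸ S.comap f) = finrank 𝕜 (E ⧸ S) := by
  have hker : LinearMap.ker (S.mkQ ∘ₗ f) = S.comap f := by
    rw [LinearMap.ker_comp, Submodule.ker_mkQ]
  rw [← hker]
  exact ((S.mkQ ∘ₗ f).quotKerEquivOfSurjective (S.surjective_mkQ_comp_of_denseRange hf)).finrank_eq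

end

theorem stmt_8_general
    {H₁ H₂ H : Type*}
    [NormedAddCommGroup H₁] [InnerProductSpace ℂ H₁] [CompleteSpace H₁]
    [NormedAddCommGroup H₂] [InnerProductSpace ℂ H₂] [CompleteSpace H₂]
    [NormedAddCommGroup H] [InnerProductSpace ℂ H] [CompleteSpace H]
    (ι : H₂ →L[ℂ] H) (hdense : DenseRange ι)
    (P : H₁ →ₗ.[ℂ] H₂) (Q : H₁ →ₗ.[ℂ] H)
    (hQF : IsFredholmPMap Q)
    (hker : Submodule.map P.domain.subtype (LinearMap.ker P.toFun) =
      Submodule.map Q.domain.subtype (LinearMap.ker Q.toFun))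
    (hrange : ∀ f : H₂, ι f ∈ LinearMap.range Q.toFun ↔ f ∈ LinearMap.range P.toFun) :
    finrank ℂ (H₂ ⧸ LinearMap.range P.toFun) =
      finrank ℂ (H ⧸ LinearMap.range Q.toFun) ∧
    indPMap P = indPMap Q := by
  obtain ⟨-, hQclosed, -, hQcodim⟩ := hQF
  have hRP : LinearMap.range P.toFun = (LinearMap.range Q.toFun).comap (ι : H₂ →ₗ[ℂ] H) :=
    Submodule.ext fun f => (hrange f).symm
  have hcodim : finrank ℂ (H₂ ⧸ LinearMap.range P.toFun) =
      finrank ℂ (H ⧸ LinearMap.range Q.toFun) := by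
    rw [hRP]
    exact (LinearMap.range Q.toFun).finrank_quotient_comap_eq_of_denseRange hdense
  have hkdim : finrank ℂ (LinearMap.ker P.toFun) = finrank ℂ (LinearMap.ker Q.toFun) := by
    rw [← Submodule.finrank_map_subtype_eq, hker, Submodule.finrank_map_subtype_eq]
  exact ⟨hcodim, by rw [indPMap, indPMap, hkdim, hcodim]⟩

/-- if `Q` is given by the same formula as `P` but viewed into a larger
space `H ⊇ H₂` (dense continuous embedding `ι`), `ker Q = ker P`, both are Fredholm,
and `R(Q) ∩ H₂ = R(P)`, then `codim_{H₂} R(P) = codim_H R(Q)` and `ind P = ind Q`. -/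
theorem stmt_8
    {H₁ H₂ H : Type*}
    [NormedAddCommGroup H₁] [InnerProductSpace ℂ H₁] [CompleteSpace H₁]
    [NormedAddCommGroup H₂] [InnerProductSpace ℂ H₂] [CompleteSpace H₂]
    [NormedAddCommGroup H] [InnerProductSpace ℂ H] [CompleteSpace H]
    (ι : H₂ →L[ℂ] H) (hinj : Function.Injective ι) (hdense : DenseRange ι)
    (P : H₁ →ₗ.[ℂ] H₂) (Q : H₁ →ₗ.[ℂ] H)
    (hPF : IsFredholmPMap P) (hQF : IsFredholmPMap Q)
    (hdom : P.domain ≤ Q.domain)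
    (hagree : ∀ x : P.domain, Q (Submodule.inclusion hdom x) = ι (P x))
    (hker : Submodule.map P.domain.subtype (LinearMap.ker P.toFun) =
      Submodule.map Q.domain.subtype (LinearMap.ker Q.toFun))
    (hrange : ∀ f : H₂, ι f ∈ LinearMap.range Q.toFun ↔ f ∈ LinearMap.range P.toFun) :
    finrank ℂ (H₂ ⧸ LinearMap.range P.toFun) =
      finrank ℂ (H ⧸ LinearMap.range Q.toFun) ∧
    indPMap P = indPMap Q :=
  stmt_8_general ι hdense P Q hQF hker hrange
end
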